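/- (Minimum positive period / p-lattice of SU(4)) For c = (c₁,c₂,c₃) ∈ ℝ³, there exist ℓ ∈ {1, −1, i, −i} and k ∈ K such that exp(H(c)) = ℓ · k if and only if each cᵢ ∈ (π/2)ℤ. In particular, the minimum positive period of each coordinate cᵢ modulo the set Z(SU(4))·K is π/2, where Z(SU(4)) = {I₄, −I₄, iI₄, −iI₄} is the center of SU(4). -/

import Mathlib

open Matrix Kronecker Complex

noncomputable section

/-- Pauli matrix `σx`. -/
def σx : Matrix (Fin 2) (Fin 2) ℂ := !![0, 1; 1, 0]

/-- Pauli matrix `σy`. -/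
def σy : Matrix (Fin 2) (Fin 2) ℂ := !![0, -Complex.I; Complex.I, 0]

/-- Pauli matrix `σz`. -/
def σz : Matrix (Fin 2) (Fin 2) ℂ := !![1, 0; 0, -1]

/-- Kronecker product of two `2 × 2` matrices, reindexed as a `4 × 4` matrix. -/
def KP (a b : Matrix (Fin 2) (Fin 2) ℂ) : Matrix (Fin 4) (Fin 4) ℂ :=
  Matrix.reindex finProdFinEquiv finProdFinEquiv (a ⊗ₖ b)

/-- The special unitary group `SU(n)`, as a set of `n × n` complex matrices. -/
def SU (n : ℕ) : Set (Matrix (Fin n) (Fin n) ℂ) :=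
  { g | g ∈ Matrix.unitaryGroup (Fin n) ℂ ∧ g.det = 1 }

/-- `K = SU(2) ⊗ SU(2)`, the set of local gates inside `SU(4)`. -/
def Kset : Set (Matrix (Fin 4) (Fin 4) ℂ) :=
  { m | ∃ a ∈ SU 2, ∃ b ∈ SU 2, m = KP a b }

/-- `H(c) = i (c₁ σx⊗σx + c₂ σy⊗σy + c₃ σz⊗σz)`. -/
def Hc (c : Fin 3 → ℝ) : Matrix (Fin 4) (Fin 4) ℂ :=
  Complex.I • ((c 0 : ℂ) • KP σx σx + (c 1 : ℂ) • KP σy σy + (c 2 : ℂ) • KP σz σz)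

abbrev M4 := Matrix (Fin 4) (Fin 4) ℂ

lemma KP_entries (a b : Matrix (Fin 2) (Fin 2) ℂ) : KP a b =
    !![a 0 0 * b 0 0, a 0 0 * b 0 1, a 0 1 * b 0 0, a 0 1 * b 0 1;
       a 0 0 * b 1 0, a 0 0 * b 1 1, a 0 1 * b 1 0, a 0 1 * b 1 1;
       a 1 0 * b 0 0, a 1 0 * b 0 1, a 1 1 * b 0 0, a 1 1 * b 0 1;
       a 1 0 * b 1 0, a 1 0 * b 1 1, a 1 1 * b 1 0, a 1 1 * b 1 1] := by
  ext i j
  fin_cases i <;> fin_cases j <;> rfl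

lemma KP_mul (a b c d : Matrix (Fin 2) (Fin 2) ℂ) : KP a b * KP c d = KP (a*c) (b*d) := by
  simp only [KP, reindex_apply, submatrix_mul_equiv, Matrix.mul_kronecker_mul]

lemma KP_one : KP 1 1 = 1 := by simp [KP]

lemma KP_smul_smul (z w : ℂ) (a b : Matrix (Fin 2) (Fin 2) ℂ) :
    KP (z • a) (w • b) = (z * w) • KP a b := by
  simp [KP, Matrix.smul_kronecker, Matrix.kronecker_smul, smul_smul, mul_comm, Matrix.submatrix_smul]

lemma XX_eq : KP σx σx = !![0,0,0,1; 0,0,1,0; 0,1,0,0; 1,0,0,0] := by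
  rw [KP_entries]; simp [σx]
lemma YY_eq : KP σy σy = !![0,0,0,-1; 0,0,1,0; 0,1,0,0; -1,0,0,0] := by
  rw [KP_entries]; simp [σy]
lemma ZZ_eq : KP σz σz = !![1,0,0,0; 0,-1,0,0; 0,0,-1,0; 0,0,0,1] := by
  rw [KP_entries]; simp [σz]

-- 2x2 products
lemma sx_mul_sx : σx * σx = 1 := by
  ext i j; fin_cases i <;> fin_cases j <;> simp [σx, Matrix.mul_apply, Fin.sum_univ_two]
lemma sy_mul_sy : σy * σy = 1 := by
  ext i j; fin_cases i <;> fin_cases j <;>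
    simp [σy, Matrix.mul_apply, Fin.sum_univ_two, Complex.I_mul_I] <;>  
    skip
lemma sz_mul_sz : σz * σz = 1 := by
  ext i j; fin_cases i <;> fin_cases j <;> simp [σz, Matrix.mul_apply, Fin.sum_univ_two]

lemma sx_mul_sy : σx * σy = Complex.I • σz := by
  ext i j; fin_cases i <;> fin_cases j <;> simp [σx, σy, σz, Matrix.mul_apply, Fin.sum_univ_two]
lemma sy_mul_sx : σy * σx = -(Complex.I • σz) := by
  ext i j; fin_cases i <;> fin_cases j <;> simp [σx, σy, σz, Matrix.mul_apply, Fin.sum_univ_two]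
lemma sx_mul_sz : σx * σz = -(Complex.I • σy) := by
  ext i j; fin_cases i <;> fin_cases j <;>
    simp [σx, σy, σz, Matrix.mul_apply, Fin.sum_univ_two, Complex.I_mul_I]
lemma sz_mul_sx : σz * σx = Complex.I • σy := by
  ext i j; fin_cases i <;> fin_cases j <;>
    simp [σx, σy, σz, Matrix.mul_apply, Fin.sum_univ_two, Complex.I_mul_I]
lemma sy_mul_sz : σy * σz = Complex.I • σx := by
  ext i j; fin_cases i <;> fin_cases j <;>
    simp [σx, σy, σz, Matrix.mul_apply, Fin.sum_univ_two, Complex.I_mul_I]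
lemma sz_mul_sy : σz * σy = -(Complex.I • σx) := by
  ext i j; fin_cases i <;> fin_cases j <;>
    simp [σx, σy, σz, Matrix.mul_apply, Fin.sum_univ_two, Complex.I_mul_I]

abbrev XX : Matrix (Fin 4) (Fin 4) ℂ := KP σx σx
abbrev YY : Matrix (Fin 4) (Fin 4) ℂ := KP σy σy
abbrev ZZ : Matrix (Fin 4) (Fin 4) ℂ := KP σz σz

lemma XX_sq : XX * XX = 1 := by rw [KP_mul, sx_mul_sx, KP_one]
lemma YY_sq : YY * YY = 1 := by rw [KP_mul, sy_mul_sy, KP_one]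
lemma ZZ_sq : ZZ * ZZ = 1 := by rw [KP_mul, sz_mul_sz, KP_one]

lemma XX_mul_YY : XX * YY = -ZZ := by
  rw [KP_mul, sx_mul_sy, KP_smul_smul, Complex.I_mul_I, neg_one_smul]
lemma YY_mul_XX : YY * XX = -ZZ := by
  rw [KP_mul, sy_mul_sx]
  rw [show -(Complex.I • σz) = (-Complex.I) • σz by simp, KP_smul_smul]
  norm_num [Complex.I_mul_I]
lemma XX_mul_ZZ : XX * ZZ = -YY := by
  rw [KP_mul, sx_mul_sz, show -(Complex.I • σy) = (-Complex.I) • σy by simp, KP_smul_smul]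
  norm_num [Complex.I_mul_I]
lemma ZZ_mul_XX : ZZ * XX = -YY := by
  rw [KP_mul, sz_mul_sx, KP_smul_smul, Complex.I_mul_I, neg_one_smul]
lemma YY_mul_ZZ : YY * ZZ = -XX := by
  rw [KP_mul, sy_mul_sz, KP_smul_smul, Complex.I_mul_I, neg_one_smul]
lemma ZZ_mul_YY : ZZ * YY = -XX := by
  rw [KP_mul, sz_mul_sy, show -(Complex.I • σx) = (-Complex.I) • σx by simp, KP_smul_smul]
  norm_num [Complex.I_mul_I]

-- SU(2) facts
lemma one_mem_SU2 : (1 : Matrix (Fin 2) (Fin 2) ℂ) ∈ SU 2 := by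
  constructor
  · exact Submonoid.one_mem _
  · simp

lemma mul_mem_SU2 {a b : Matrix (Fin 2) (Fin 2) ℂ} (ha : a ∈ SU 2) (hb : b ∈ SU 2) :
    a * b ∈ SU 2 := by
  exact ⟨Submonoid.mul_mem _ ha.1 hb.1, by rw [Matrix.det_mul, ha.2, hb.2, one_mul]⟩

lemma Isx_mem_SU2 : Complex.I • σx ∈ SU 2 := by
  constructor
  · rw [Matrix.mem_unitaryGroup_iff]
    ext i j
    fin_cases i <;> fin_cases j <;>
      simp [σx, Matrix.mul_apply, Fin.sum_univ_two, Matrix.conjTranspose_apply] <;>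
      simp [Complex.ext_iff]
  · simp [Matrix.det_smul, σx, Matrix.det_fin_two_of, Complex.I_mul_I]

lemma Isy_mem_SU2 : Complex.I • σy ∈ SU 2 := by
  constructor
  · rw [Matrix.mem_unitaryGroup_iff]
    ext i j
    fin_cases i <;> fin_cases j <;>
      simp [σy, Matrix.mul_apply, Fin.sum_univ_two, Matrix.conjTranspose_apply] <;>
      simp [Complex.ext_iff]
  · simp [Matrix.det_smul, σy, Matrix.det_fin_two_of, Complex.I_mul_I]

lemma Isz_mem_SU2 : Complex.I • σz ∈ SU 2 := by
  constructor
  · rw [Matrix.mem_unitaryGroup_iff]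
    ext i j
    fin_cases i <;> fin_cases j <;>
      simp [σz, Matrix.mul_apply, Fin.sum_univ_two, Matrix.conjTranspose_apply] <;>
      simp [Complex.ext_iff]
  · simp [Matrix.det_smul, σz, Matrix.det_fin_two_of, Complex.I_mul_I]

-- symplectic invariant
lemma symplectic (a : Matrix (Fin 2) (Fin 2) ℂ) (ha : a.det = 1) : a * σy * aᵀ = σy := by
  rw [Matrix.det_fin_two] at ha
  ext i j
  fin_cases i <;> fin_cases j <;>
    simp [σy, Matrix.mul_apply, Fin.sum_univ_two, Matrix.transpose_apply]
  all_goals first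
  | ring1
  | linear_combination Complex.I * ha
  | linear_combination (-Complex.I) * ha


lemma exp_ItP (P : M4) (hP : P * P = 1) (t : ℝ) :
    NormedSpace.exp ((Complex.I * t) • P) =
      (Real.cos t : ℂ) • (1 : M4) + (Complex.I * Real.sin t) • P := by
  letI : SeminormedRing M4 := Matrix.linftyOpSemiNormedRing
  letI : NormedRing M4 := Matrix.linftyOpNormedRing
  letI : NormedAlgebra ℂ M4 := Matrix.linftyOpNormedAlgebra
  set f : ℂ × ℂ →+* M4 :=
    { toFun := fun p => ((p.1 + p.2)/2) • (1 : M4) + ((p.1 - p.2)/2) • P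
      map_one' := by norm_num
      map_mul' := by
        intro p q
        simp only [Prod.fst_mul, Prod.snd_mul, add_mul, mul_add, smul_mul_smul_comm, mul_one, one_mul,
          hP]
        match_scalars <;> ring
      map_zero' := by norm_num
      map_add' := by
        intro p q
        simp only [Prod.fst_add, Prod.snd_add]
        match_scalars <;> ring } with hf
  have hfc : Continuous f := by
    simp only [hf, RingHom.coe_mk, MonoidHom.coe_mk, OneHom.coe_mk]
    fun_prop
  have key := NormedSpace.map_exp f hfc (⟨Complex.I * t, -(Complex.I * t)⟩ : ℂ × ℂ)
  have harg : f (⟨Complex.I * t, -(Complex.I * t)⟩ : ℂ × ℂ) = (Complex.I * t) • P := by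
    simp [hf]
  rw [harg] at key
  refine Eq.trans key.symm ?_
  have hexp : NormedSpace.exp (⟨Complex.I * t, -(Complex.I * t)⟩ : ℂ × ℂ)
      = ⟨Complex.exp (Complex.I * t), Complex.exp (-(Complex.I * t))⟩ := by
    ext
    · rw [Prod.fst_exp, Complex.exp_eq_exp_ℂ]
    · rw [Prod.snd_exp, Complex.exp_eq_exp_ℂ]
  rw [hexp]
  simp only [hf, RingHom.coe_mk, MonoidHom.coe_mk, OneHom.coe_mk]
  congr 1
  · congr 1
    rw [Complex.ofReal_cos, Complex.cos, mul_comm]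
    ring_nf
  · congr 1
    rw [Complex.ofReal_sin, Complex.sin, mul_comm]
    ring_nf
    rw [Complex.I_sq]
    ring

def Fg (t : ℝ) (P : M4) : M4 := (Real.cos t : ℂ) • 1 + (Complex.I * Real.sin t) • P

lemma FgXX_eq (t : ℝ) : Fg t XX =
    !![(Real.cos t : ℂ), 0, 0, Complex.I * Real.sin t;
       0, (Real.cos t : ℂ), Complex.I * Real.sin t, 0;
       0, Complex.I * Real.sin t, (Real.cos t : ℂ), 0;
       Complex.I * Real.sin t, 0, 0, (Real.cos t : ℂ)] := by
  rw [Fg]; simp only [XX]; rw [XX_eq]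
  ext i j
  fin_cases i <;> fin_cases j <;> simp [Matrix.one_apply, Matrix.vecHead, Matrix.vecTail]

lemma FgYY_eq (t : ℝ) : Fg t YY =
    !![(Real.cos t : ℂ), 0, 0, -(Complex.I * Real.sin t);
       0, (Real.cos t : ℂ), Complex.I * Real.sin t, 0;
       0, Complex.I * Real.sin t, (Real.cos t : ℂ), 0;
       -(Complex.I * Real.sin t), 0, 0, (Real.cos t : ℂ)] := by
  rw [Fg]; simp only [YY]; rw [YY_eq]
  ext i j
  fin_cases i <;> fin_cases j <;> simp [Matrix.one_apply, Matrix.vecHead, Matrix.vecTail]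

lemma FgZZ_eq (t : ℝ) : Fg t ZZ =
    !![(Real.cos t : ℂ) + Complex.I * Real.sin t, 0, 0, 0;
       0, (Real.cos t : ℂ) - Complex.I * Real.sin t, 0, 0;
       0, 0, (Real.cos t : ℂ) - Complex.I * Real.sin t, 0;
       0, 0, 0, (Real.cos t : ℂ) + Complex.I * Real.sin t] := by
  rw [Fg]; simp only [ZZ]; rw [ZZ_eq]
  ext i j
  fin_cases i <;> fin_cases j <;> simp [Matrix.one_apply, Matrix.vecHead, Matrix.vecTail] <;> ring

-- master formula
lemma exp_Hc (c : Fin 3 → ℝ) :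
    NormedSpace.exp (Hc c) = Fg (c 0) XX * (Fg (c 1) YY * Fg (c 2) ZZ) := by
  have hXY : Commute XX YY := by unfold Commute SemiconjBy; rw [XX_mul_YY, YY_mul_XX]
  have hXZ : Commute XX ZZ := by unfold Commute SemiconjBy; rw [XX_mul_ZZ, ZZ_mul_XX]
  have hYZ : Commute YY ZZ := by unfold Commute SemiconjBy; rw [YY_mul_ZZ, ZZ_mul_YY]
  have hHc : Hc c = (Complex.I * (c 0 : ℝ)) • XX
      + ((Complex.I * (c 1 : ℝ)) • YY + (Complex.I * (c 2 : ℝ)) • ZZ) := by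
    simp only [Hc, smul_add, smul_smul, add_assoc, XX, YY, ZZ]
  rw [hHc]
  rw [Matrix.exp_add_of_commute]
  · rw [Matrix.exp_add_of_commute]
    · rw [exp_ItP XX XX_sq, exp_ItP YY YY_sq, exp_ItP ZZ ZZ_sq]
      rfl
    · exact (hYZ.smul_left _).smul_right _
  · exact Commute.add_right ((hXY.smul_left _).smul_right _) ((hXZ.smul_left _).smul_right _)
lemma entries_core (u1 s1 u2 s2 u3 s3 : ℝ) (L : ℂ) (hL : L.im = 0)
    (h1 : s1^2 + u1^2 = 1) (h2 : s2^2 + u2^2 = 1) (h3 : s3^2 + u3^2 = 1)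
    (h : !![(u1:ℂ), 0, 0, Complex.I * s1; 0, (u1:ℂ), Complex.I * s1, 0;
            0, Complex.I * s1, (u1:ℂ), 0; Complex.I * s1, 0, 0, (u1:ℂ)] *
      (!![(u2:ℂ), 0, 0, -(Complex.I * s2); 0, (u2:ℂ), Complex.I * s2, 0;
            0, Complex.I * s2, (u2:ℂ), 0; -(Complex.I * s2), 0, 0, (u2:ℂ)] *
       !![(u3:ℂ) + Complex.I * s3, 0, 0, 0; 0, (u3:ℂ) - Complex.I * s3, 0, 0;
          0, 0, (u3:ℂ) - Complex.I * s3, 0; 0, 0, 0, (u3:ℂ) + Complex.I * s3]) = L • 1) :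
    s1 = 0 ∧ s2 = 0 ∧ s3 = 0 := by
  have h00 : _ = (L • (1:M4)) 0 0 := congrFun (congrFun h 0) 0
  have h11 : _ = (L • (1:M4)) 1 1 := congrFun (congrFun h 1) 1
  have h03 : _ = (L • (1:M4)) 0 3 := congrFun (congrFun h 0) 3
  have h12 : _ = (L • (1:M4)) 1 2 := congrFun (congrFun h 1) 2
  simp [Matrix.mul_apply, Fin.sum_univ_four, Matrix.one_apply] at h00 h11 h03 h12
  have r0 := congrArg Complex.re h00
  have i0 := congrArg Complex.im h00
  have r1 := congrArg Complex.re h11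
  have i1 := congrArg Complex.im h11
  have r3 := congrArg Complex.re h03
  have i3 := congrArg Complex.im h03
  have r2 := congrArg Complex.re h12
  have i2 := congrArg Complex.im h12
  simp at r0 i0 r1 i1 r3 i3 r2 i2
  refine ⟨?_, ?_, ?_⟩
  · linear_combination (u2*u3/2)*i3 + (u2*u3/2)*i2 + (u2*s3/2)*r2 - (u2*s3/2)*r3
      + (s2*u3/2)*r0 - (s2*u3/2)*r1 + (s2*s3/2)*i0 + (s2*s3/2)*i1 + (s2*s3)*hL
      - s1*(s3^2+u3^2)*h2 - s1*h3
  · linear_combination (u1*u3/2)*i2 - (u1*u3/2)*i3 + (u1*s3/2)*r3 + (u1*s3/2)*r2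
      + (s1*u3/2)*r0 - (s1*u3/2)*r1 + (s1*s3/2)*i0 + (s1*s3/2)*i1 + (s1*s3)*hL
      - s2*(s3^2+u3^2)*h1 - s2*h3
  · linear_combination (u1*u2/2)*i0 - (u1*u2/2)*i1 + (u1*s2/2)*r3 + (u1*s2/2)*r2
      + (s1*u2/2)*r2 - (s1*u2/2)*r3 + (s1*s2/2)*i0 + (s1*s2/2)*i1 + (s1*s2)*hL
      - s3*(s2^2+u2^2)*h1 - s3*h2

-- transpose facts
lemma KP_transpose (a b : Matrix (Fin 2) (Fin 2) ℂ) : (KP a b)ᵀ = KP aᵀ bᵀ := by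
  ext i j; fin_cases i <;> fin_cases j <;> rfl

lemma XXT : (KP σx σx)ᵀ = KP σx σx := by
  rw [XX_eq]; ext i j; fin_cases i <;> fin_cases j <;> rfl
lemma YYT : (KP σy σy)ᵀ = KP σy σy := by
  rw [YY_eq]; ext i j; fin_cases i <;> fin_cases j <;> rfl
lemma ZZT : (KP σz σz)ᵀ = KP σz σz := by
  rw [ZZ_eq]; ext i j; fin_cases i <;> fin_cases j <;> rfl

lemma Hc_symm (c : Fin 3 → ℝ) : (Hc c)ᵀ = Hc c := by
  simp [Hc, Matrix.transpose_smul, Matrix.transpose_add, XXT, YYT, ZZT]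

lemma commXY : Commute XX YY := by unfold Commute SemiconjBy; rw [XX_mul_YY, YY_mul_XX]
lemma commYZ : Commute YY ZZ := by unfold Commute SemiconjBy; rw [YY_mul_ZZ, ZZ_mul_YY]

lemma commHY (c : Fin 3 → ℝ) : Commute (Hc c) (KP σy σy) := by
  have h1 : Commute XX YY := commXY
  have h2 : Commute YY YY := Commute.refl _
  have h3 : Commute ZZ YY := commYZ.symm
  simp only [Hc]
  exact Commute.smul_left
    (Commute.add_left (Commute.add_left (h1.smul_left _) (h2.smul_left _)) (h3.smul_left _)) _

lemma mu4_mul {x y : ℂ} (hx : x ∈ ({1, -1, Complex.I, -Complex.I} : Set ℂ))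
    (hy : y ∈ ({1, -1, Complex.I, -Complex.I} : Set ℂ)) :
    x * y ∈ ({1, -1, Complex.I, -Complex.I} : Set ℂ) := by
  simp only [Set.mem_insert_iff, Set.mem_singleton_iff] at *
  rcases hx with rfl|rfl|rfl|rfl <;> rcases hy with rfl|rfl|rfl|rfl <;>
    norm_num [Complex.I_mul_I] <;> tauto

lemma scaled_mul (ℓ ℓ' : ℂ) (a b a' b' : Matrix (Fin 2) (Fin 2) ℂ) :
    (ℓ • KP a b) * (ℓ' • KP a' b') = (ℓ * ℓ') • KP (a * a') (b * b') := by
  rw [smul_mul_smul_comm, KP_mul]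

lemma trig_dichot (n : ℤ) (t : ℝ) (ht : t = Real.pi/2 * n) :
    (Real.sin t = 0 ∧ (Real.cos t = 1 ∨ Real.cos t = -1)) ∨
      (Real.cos t = 0 ∧ (Real.sin t = 1 ∨ Real.sin t = -1)) := by
  have h2t : Real.sin (2*t) = 0 := by
    rw [ht, show 2*(Real.pi/2*(n:ℝ)) = (n:ℝ)*Real.pi by ring, Real.sin_int_mul_pi]
  rw [Real.sin_two_mul] at h2t
  have hsc : Real.sin t * Real.cos t = 0 := by linarith
  have hpy := Real.sin_sq_add_cos_sq t
  rcases mul_eq_zero.mp hsc with h | h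
  · left
    refine ⟨h, ?_⟩
    have h' : (Real.cos t - 1) * (Real.cos t + 1) = 0 := by nlinarith
    rcases mul_eq_zero.mp h' with h'' | h''
    · left; linarith
    · right; linarith
  · right
    refine ⟨h, ?_⟩
    have h' : (Real.sin t - 1) * (Real.sin t + 1) = 0 := by nlinarith
    rcases mul_eq_zero.mp h' with h'' | h''
    · left; linarith
    · right; linarith

lemma Fg_decomp (t : ℝ) (n : ℤ) (ht : t = Real.pi/2 * n) (σ : Matrix (Fin 2) (Fin 2) ℂ)
    (hmem : Complex.I • σ ∈ SU 2) :
    ∃ ℓ ∈ ({1, -1, Complex.I, -Complex.I} : Set ℂ), ∃ a ∈ SU 2, ∃ b ∈ SU 2,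
      Fg t (KP σ σ) = ℓ • KP a b := by
  rcases trig_dichot n t ht with ⟨hs, hc⟩ | ⟨hc, hs⟩
  · refine ⟨(Real.cos t : ℂ), ?_, 1, one_mem_SU2, 1, one_mem_SU2, ?_⟩
    · rcases hc with h|h <;> simp [h]
    · rw [KP_one, Fg, hs]
      simp
  · refine ⟨-(Complex.I * (Real.sin t : ℝ)), ?_, Complex.I • σ, hmem, Complex.I • σ, hmem, ?_⟩
    · rcases hs with h|h <;> simp [h]
    · rw [KP_smul_smul, Fg, hc, Complex.I_mul_I]
      simp

lemma backward (c : Fin 3 → ℝ) (h : ∀ i, ∃ n : ℤ, c i = Real.pi/2 * n) :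
    ∃ ℓ ∈ ({1, -1, Complex.I, -Complex.I} : Set ℂ), ∃ k ∈ Kset,
      NormedSpace.exp (Hc c) = ℓ • k := by
  obtain ⟨n1, h1⟩ := h 0
  obtain ⟨n2, h2⟩ := h 1
  obtain ⟨n3, h3⟩ := h 2
  obtain ⟨ℓ1, hℓ1, a1, ha1, b1, hb1, hF1⟩ := Fg_decomp (c 0) n1 h1 σx Isx_mem_SU2
  obtain ⟨ℓ2, hℓ2, a2, ha2, b2, hb2, hF2⟩ := Fg_decomp (c 1) n2 h2 σy Isy_mem_SU2
  obtain ⟨ℓ3, hℓ3, a3, ha3, b3, hb3, hF3⟩ := Fg_decomp (c 2) n3 h3 σz Isz_mem_SU2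
  refine ⟨ℓ1 * (ℓ2 * ℓ3), mu4_mul hℓ1 (mu4_mul hℓ2 hℓ3),
    KP (a1 * (a2 * a3)) (b1 * (b2 * b3)),
    ⟨a1 * (a2 * a3), mul_mem_SU2 ha1 (mul_mem_SU2 ha2 ha3),
     b1 * (b2 * b3), mul_mem_SU2 hb1 (mul_mem_SU2 hb2 hb3), rfl⟩, ?_⟩
  rw [exp_Hc, hF1, hF2, hF3, scaled_mul, scaled_mul]

lemma forward (c : Fin 3 → ℝ) (ℓ : ℂ) (hℓ : ℓ ∈ ({1, -1, Complex.I, -Complex.I} : Set ℂ))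
    (k : Matrix (Fin 4) (Fin 4) ℂ) (hk : k ∈ Kset)
    (hE : NormedSpace.exp (Hc c) = ℓ • k) :
    ∀ i, ∃ n : ℤ, c i = Real.pi/2 * n := by
  obtain ⟨a, ha, b, hb, rfl⟩ := hk
  set E := NormedSpace.exp (Hc c) with hEdef
  have hET : Eᵀ = E := by
    rw [hEdef, ← Matrix.exp_transpose, Hc_symm]
  have hcomm : Commute E (KP σy σy) := (commHY c).exp_left
  have h1 : E * KP σy σy * Eᵀ = (ℓ * ℓ) • KP σy σy := by
    rw [hE, Matrix.transpose_smul, KP_transpose]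
    simp only [smul_mul_assoc, mul_smul_comm, smul_smul]
    rw [KP_mul, KP_mul, symplectic a ha.2, symplectic b hb.2]
  have h2 : E * KP σy σy * Eᵀ = E * E * KP σy σy := by
    rw [hET, mul_assoc, hcomm.symm.eq, ← mul_assoc]
  have key : NormedSpace.exp (Hc (fun i => 2 * c i)) = (ℓ * ℓ) • 1 := by
    have hsum : Hc (fun i => 2 * c i) = Hc c + Hc c := by
      simp only [Hc]
      push_cast
      module
    rw [hsum, Matrix.exp_add_of_commute _ _ (Commute.refl _), ← hEdef]
    have h3 : E * E * KP σy σy = (ℓ * ℓ) • KP σy σy := by rw [← h2, h1]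
    have h4 := congrArg (fun M => M * KP σy σy) h3
    simp only [mul_assoc, smul_mul_assoc] at h4
    rwa [KP_mul, sy_mul_sy, KP_one, mul_one] at h4
  have hmaster := exp_Hc (fun i => 2 * c i)
  rw [key] at hmaster
  simp only [FgXX_eq, FgYY_eq, FgZZ_eq] at hmaster
  have hL : (ℓ * ℓ).im = 0 := by
    simp only [Set.mem_insert_iff, Set.mem_singleton_iff] at hℓ
    rcases hℓ with rfl|rfl|rfl|rfl <;> simp [Complex.I_mul_I]
  have hs := entries_core (Real.cos (2 * c 0)) (Real.sin (2 * c 0))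
    (Real.cos (2 * c 1)) (Real.sin (2 * c 1)) (Real.cos (2 * c 2)) (Real.sin (2 * c 2))
    (ℓ * ℓ) hL (Real.sin_sq_add_cos_sq _) (Real.sin_sq_add_cos_sq _) (Real.sin_sq_add_cos_sq _)
    (by simpa using hmaster.symm)
  intro i
  have get : ∀ t : ℝ, Real.sin (2 * t) = 0 → ∃ n : ℤ, t = Real.pi/2 * n := by
    intro t hsin
    obtain ⟨m, hm⟩ := Real.sin_eq_zero_iff.mp hsin
    exact ⟨m, by linarith⟩
  fin_cases i
  · exact get _ hs.1
  · exact get _ hs.2.1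
  · exact get _ hs.2.2


/-- p-lattice of SU(4): `exp(H(c))` lies in `Z(SU(4))·K` iff each `cᵢ ∈ (π/2)ℤ`;
in particular the minimum positive period of each coordinate modulo `Z(SU(4))·K` is `π/2`. -/
theorem stmt7 :
    (∀ c : Fin 3 → ℝ,
      (∃ ℓ ∈ ({1, -1, Complex.I, -Complex.I} : Set ℂ), ∃ k ∈ Kset,
          NormedSpace.exp (Hc c) = ℓ • k) ↔
        ∀ i, ∃ n : ℤ, c i = Real.pi / 2 * n) ∧
    (∀ i : Fin 3,
      IsLeast { t : ℝ | 0 < t ∧ ∃ ℓ ∈ ({1, -1, Complex.I, -Complex.I} : Set ℂ), ∃ k ∈ Kset,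
          NormedSpace.exp (Hc (Pi.single i t)) = ℓ • k } (Real.pi / 2)) := by
  have part1 : ∀ c : Fin 3 → ℝ,
      (∃ ℓ ∈ ({1, -1, Complex.I, -Complex.I} : Set ℂ), ∃ k ∈ Kset,
          NormedSpace.exp (Hc c) = ℓ • k) ↔
        ∀ i, ∃ n : ℤ, c i = Real.pi / 2 * n := by
    intro c
    constructor
    · rintro ⟨ℓ, hℓ, k, hk, hE⟩
      exact forward c ℓ hℓ k hk hE
    · exact backward c
  refine ⟨part1, ?_⟩
  intro i
  constructor
  · refine ⟨by positivity, ?_⟩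
    apply (part1 _).mpr
    intro j
    by_cases hij : j = i
    · subst hij
      exact ⟨1, by simp [Pi.single_eq_same]⟩
    · exact ⟨0, by simp [Pi.single_eq_of_ne hij]⟩
  · rintro t ⟨ht, hmem⟩
    obtain ⟨n, hn⟩ := (part1 _).mp hmem i
    rw [Pi.single_eq_same] at hn
    have hπ := Real.pi_pos
    have hn0 : 0 < (n:ℝ) := by nlinarith
    have hn1 : (1:ℤ) ≤ n := by exact_mod_cast hn0
    have hn1' : (1:ℝ) ≤ (n:ℝ) := by exact_mod_cast hn1
    nlinarith
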